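/- arXiv:gr-qc/0110114 — 4 statements merged into one kernel-verified Lean document; each statement's English description precedes it below -/
import Mathlib

section
/- Let a, b, c be complex numbers with a+1-b not a nonpositive integer, and let x > 1 be real. Then x^{-a} · ₂F₁(a, a+1-c; a+1-b; -1/x) = (1+x)^{-a} · ₂F₁(a, c-b; a+1-b; 1/(1+x)). (Pfaff-type transformation of the analytically continued solution u₃(z) = (-z)^{-a}·₂F₁(a, a+1-c; a+1-b; 1/z) at the real point z = -x.) -/
/-!
Expanding each `(1 - w)^(-a-k)` in `(1 - w)^(-a) ₂F₁(a, C-B; C; w/(w-1))` by the binomial series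
gives a double series that converges absolutely for `|w| < 1/2`, because its row sums are bounded
by a `₂F₁` series at `|w|/(1-|w|) < 1`. Summing the same double series along the diagonals
`k + m = n` instead, the Chu–Vandermonde identity turns the inner sums into the coefficients of
`₂F₁(a, B; C; w)`: this is Pfaff's transformation. At `w = 1/(1+x)` with `x > 1` one has
`w/(w-1) = -1/x` and `(1+x)(1-w) = x`, and `B = c-b`, `C = a+1-b` give the theorem.
-/

open Complex Filter Set MeasureTheory

/-- The `n`-th term of the Gauss hypergeometric series `₂F₁(a,b;c;z)`. -/
noncomputable def hypTerm (a b c z : ℂ) (n : ℕ) : ℂ :=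
  (ascPochhammer ℂ n).eval a * (ascPochhammer ℂ n).eval b /
    ((ascPochhammer ℂ n).eval c * (n.factorial : ℂ)) * z ^ n

/-- The Gauss hypergeometric function `₂F₁(a,b;c;z)`. -/
noncomputable def hyp (a b c z : ℂ) : ℂ := ∑' n, hypTerm a b c z n

open Finset

lemma ascPochhammer_eval_add {R : Type*} [CommSemiring R] (r : R) (k m : ℕ) :
    (ascPochhammer R (k + m)).eval r =
      (ascPochhammer R k).eval r * (ascPochhammer R m).eval (r + k) := by
  rw [← ascPochhammer_mul, Polynomial.eval_mul, Polynomial.eval_comp]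
  simp

lemma ascPochhammer_eval_ne_zero {K : Type*} [Field K] {c : K} (hc : ∀ n : ℕ, c ≠ -n) (n : ℕ) :
    (ascPochhammer K n).eval c ≠ 0 := by
  simp only [ne_eq, ascPochhammer_eval_eq_zero_iff, not_exists, not_and]
  exact fun k _ h => hc k (by rw [h, neg_neg])

lemma norm_ascPochhammer_eval_le {R : Type*} [NormedRing R] [NormOneClass R] {r : R} {x : ℝ}
    (hr : ‖r‖ ≤ x) (n : ℕ) : ‖(ascPochhammer R n).eval r‖ ≤ (ascPochhammer ℝ n).eval x := by
  induction n with
  | zero => simp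
  | succ n ih =>
    rw [ascPochhammer_succ_eval, ascPochhammer_succ_eval]
    have hx : 0 ≤ x := (norm_nonneg r).trans hr
    calc ‖(ascPochhammer R n).eval r * (r + n)‖
        ≤ ‖(ascPochhammer R n).eval r‖ * (‖r‖ + ‖(n : R)‖) :=
          (norm_mul_le _ _).trans (by gcongr; exact norm_add_le _ _)
      _ ≤ (ascPochhammer ℝ n).eval x * (x + n) := by
          gcongr
          · exact (norm_nonneg _).trans ih
          · simpa using Nat.norm_cast_le (α := R) n

lemma Ring.choose_add_sub_one_eq {K : Type*} [Field K] [CharZero K] (a : K) (n : ℕ) :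
    Ring.choose (a + n - 1) n = (ascPochhammer K n).eval a / n.factorial := by
  rw [← Ring.multichoose_eq, eq_div_iff (Nat.cast_ne_zero.2 n.factorial_ne_zero), mul_comm,
    ← nsmul_eq_mul, Ring.factorial_nsmul_multichoose_eq_ascPochhammer,
    Polynomial.ascPochhammer_smeval_eq_eval]

/-- Chu–Vandermonde, read off from `Ring.descPochhammer_smeval_add` at `r = -β`,
`s = γ + n - 1`. -/
lemma sum_antidiagonal_choose_neg_one_pow_ascPochhammer {K : Type*} [Field K] (β γ : K) (n : ℕ) :
    ∑ p ∈ antidiagonal n, (n.choose p.1 : K) * ((-1) ^ p.1 * (ascPochhammer K p.1).eval β) *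
      (ascPochhammer K p.2).eval (γ + p.1) = (ascPochhammer K n).eval (γ - β) := by
  have hdesc (k : ℕ) (x : K) :
      (descPochhammer ℤ k).smeval x = (ascPochhammer K k).eval (x - k + 1) := by
    rw [Polynomial.descPochhammer_smeval_eq_ascPochhammer, Polynomial.ascPochhammer_smeval_eq_eval]
  have hneg (i : ℕ) :
      (descPochhammer ℤ i).smeval (-β) = (-1) ^ i * (ascPochhammer K i).eval β := by
    have := Polynomial.ascPochhammer_smeval_neg_eq_descPochhammer (-β) i
    rw [neg_neg, Polynomial.ascPochhammer_smeval_eq_eval, Units.smul_def, zsmul_eq_mul,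
      Int.cast_negOnePow_natCast] at this
    rw [this, ← mul_assoc, ← mul_pow]
    simp
  have hvand := Ring.descPochhammer_smeval_add (r := -β) (s := γ + n - 1) n (Commute.all _ _)
  rw [hdesc, show -β + (γ + n - 1) - n + 1 = γ - β by ring] at hvand
  rw [hvand]
  refine sum_congr rfl fun ⟨i, j⟩ hij => ?_
  obtain rfl : i + j = n := HasAntidiagonal.mem_antidiagonal.1 hij
  rw [hneg, hdesc, mul_assoc]
  push_cast
  ring_nf

lemma HasFPowerSeriesOnBall.hasSum_ascPochhammer_div_factorial_mul_pow {𝕜 : Type*} [RCLike 𝕜]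
    {f : 𝕜 → 𝕜} {a : 𝕜}
    (hf : HasFPowerSeriesOnBall f (.ofScalars 𝕜 fun n => Ring.choose (a + n - 1) n) 0 1)
    {u : 𝕜} (hu : ‖u‖ < 1) :
    HasSum (fun n => (ascPochhammer 𝕜 n).eval a / n.factorial * u ^ n) (f u) := by
  have hu' : ‖u‖₊ < 1 := mod_cast hu
  have := hf.hasSum (y := u) (by simpa [enorm_eq_nnnorm] using hu')
  simp only [zero_add, FormalMultilinearSeries.ofScalars_apply_eq, smul_eq_mul,
    Ring.choose_add_sub_one_eq] at this
  simpa only [mul_comm] using this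

lemma Complex.hasSum_ascPochhammer_div_factorial_mul_pow (s : ℂ) {u : ℂ} (hu : ‖u‖ < 1) :
    HasSum (fun n => (ascPochhammer ℂ n).eval s / n.factorial * u ^ n) ((1 - u) ^ (-s)) := by
  simpa [cpow_neg] using
    (one_div_one_sub_cpow_hasFPowerSeriesOnBall_zero s).hasSum_ascPochhammer_div_factorial_mul_pow
      hu

lemma Real.hasSum_ascPochhammer_div_factorial_mul_pow (s : ℝ) {t : ℝ} (ht0 : 0 ≤ t)
    (ht : t < 1) :
    HasSum (fun n => (ascPochhammer ℝ n).eval s / n.factorial * t ^ n) ((1 - t) ^ (-s)) := by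
  simpa [Real.rpow_neg (by linarith : (0 : ℝ) ≤ 1 - t)] using
    (one_div_one_sub_rpow_hasFPowerSeriesOnBall_zero s).hasSum_ascPochhammer_div_factorial_mul_pow
      (by rwa [Real.norm_of_nonneg ht0])

lemma hypTerm_eq_mul_pow (a b c z : ℂ) (n : ℕ) :
    hypTerm a b c z n = hypTerm a b c 1 n * z ^ n := by
  simp [hypTerm]

lemma one_le_radius_ordinaryHypergeometricSeries {a b c : ℂ} (hc : ∀ n : ℕ, c ≠ -n) :
    1 ≤ (ordinaryHypergeometricSeries ℂ a b c).radius := by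
  by_cases hab : ∃ k : ℕ, a = -k ∨ b = -k
  · obtain ⟨k, rfl | rfl⟩ := hab
    · simp [ordinaryHypergeometric_radius_top_of_neg_nat₁]
    · simp [ordinaryHypergeometric_radius_top_of_neg_nat₂]
  · push Not at hab
    refine (ordinaryHypergeometricSeries_radius_eq_one ℂ a b c fun k => ?_).ge
    refine ⟨fun h => (hab k).1 ?_, fun h => (hab k).2 ?_, fun h => hc k ?_⟩ <;>
      rw [h, neg_neg]

lemma summable_norm_hypTerm (a b : ℂ) {c z : ℂ} (hc : ∀ n : ℕ, c ≠ -n) (hz : ‖z‖ < 1) :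
    Summable fun n => ‖hypTerm a b c z n‖ := by
  have := (ordinaryHypergeometricSeries ℂ a b c).summable_norm_mul_pow (r := ‖z‖₊)
    ((ENNReal.coe_lt_one_iff.2 hz).trans_le (one_le_radius_ordinaryHypergeometricSeries hc))
  refine this.congr fun n => ?_
  rw [hypTerm_eq_mul_pow, norm_mul, norm_pow, coe_nnnorm]
  congr 1
  simp only [ordinaryHypergeometricSeries, FormalMultilinearSeries.norm_apply_eq_norm_coef,
    FormalMultilinearSeries.coeff_ofScalars, Complex.norm_mul, norm_inv, RCLike.norm_natCast,
    hypTerm, one_pow, mul_one, Complex.norm_div]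
  ring

lemma HasSum.sum_antidiagonal {A α : Type*} [AddCommMonoid A] [HasAntidiagonal A]
    [AddCommMonoid α] [TopologicalSpace α] [ContinuousAdd α] [T3Space α]
    {f : A × A → α} {s : α} (hf : HasSum f s) :
    HasSum (fun n => ∑ p ∈ antidiagonal n, f p) s :=
  (HasAntidiagonal.sigmaAntidiagonalEquivProd.hasSum_iff.2 hf).sigma fun n =>
    (antidiagonal n).hasSum f

/-- The terms of `(1 - w)^(-a) ₂F₁(a, β; C; w/(w-1))` after expanding each `(1 - w)^(-a-k)`
binomially. -/
noncomputable def pfaffTerm (a β C w : ℂ) (p : ℕ × ℕ) : ℂ :=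
  hypTerm a β C (-w) p.1 * ((ascPochhammer ℂ p.2).eval (a + p.1) / p.2.factorial * w ^ p.2)

section Pfaff

variable {a β C w : ℂ}

lemma hasSum_pfaffTerm_fiber (hw : ‖w‖ < 1) (k : ℕ) :
    HasSum (fun m => pfaffTerm a β C w (k, m))
      ((1 - w) ^ (-a) * hypTerm a β C (w / (w - 1)) k) := by
  have h1w : 1 - w ≠ 0 := fun h => by simp [show w = 1 by linear_combination -h] at hw
  have hrow : (1 - w) ^ (-a) * hypTerm a β C (w / (w - 1)) k =
      hypTerm a β C (-w) k * (1 - w) ^ (-(a + k)) := by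
    rw [hypTerm_eq_mul_pow a β C (w / (w - 1)), hypTerm_eq_mul_pow a β C (-w), neg_add,
      cpow_add _ _ h1w, cpow_neg _ (k : ℂ), cpow_natCast, ← neg_sub 1 w, div_neg, ← neg_div,
      div_pow]
    ring
  rw [hrow]
  exact (Complex.hasSum_ascPochhammer_div_factorial_mul_pow (a + k) hw).mul_left
    (hypTerm a β C (-w) k)

lemma pfaffTerm_eq_of_add_eq (hC : ∀ n : ℕ, C ≠ -n) {i j n : ℕ} (hij : i + j = n) :
    pfaffTerm a β C w (i, j) =
      (ascPochhammer ℂ n).eval a / ((ascPochhammer ℂ n).eval C * n.factorial) * w ^ n *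
        ((n.choose i : ℂ) * ((-1) ^ i * (ascPochhammer ℂ i).eval β) *
          (ascPochhammer ℂ j).eval (C + i)) := by
  subst hij
  have hCi := ascPochhammer_eval_ne_zero hC i
  have hCj : (ascPochhammer ℂ j).eval (C + i) ≠ 0 :=
    ascPochhammer_eval_ne_zero (fun n h => hC (i + n) (by push_cast; linear_combination h)) j
  have hfac : ((i + j).factorial : ℂ) = (i + j).choose i * i.factorial * j.factorial := by
    rw [Nat.choose_symm_add]
    exact_mod_cast (Nat.add_choose_mul_factorial_mul_factorial i j).symm
  have hchoose : ((i + j).choose i : ℂ) ≠ 0 := Nat.cast_ne_zero.2 (Nat.choose_pos (by omega)).ne'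
  simp only [pfaffTerm, hypTerm, ascPochhammer_eval_add, hfac]
  field_simp
  ring

lemma sum_antidiagonal_pfaffTerm (hC : ∀ n : ℕ, C ≠ -n) (n : ℕ) :
    ∑ p ∈ antidiagonal n, pfaffTerm a β C w p = hypTerm a (C - β) C w n := by
  rw [sum_congr rfl fun p hp => pfaffTerm_eq_of_add_eq hC (HasAntidiagonal.mem_antidiagonal.1 hp),
    ← mul_sum, sum_antidiagonal_choose_neg_one_pow_ascPochhammer, hypTerm]
  ring

lemma norm_pfaffTerm_le (p : ℕ × ℕ) :
    ‖pfaffTerm a β C w p‖ ≤ ‖hypTerm a β C (-w) p.1‖ *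
      ((ascPochhammer ℝ p.2).eval (‖a‖ + p.1) / p.2.factorial * ‖w‖ ^ p.2) := by
  rw [pfaffTerm, norm_mul, norm_mul, norm_div, norm_pow, RCLike.norm_natCast]
  gcongr
  refine norm_ascPochhammer_eval_le ((norm_add_le _ _).trans ?_) _
  simp

lemma summable_pfaffTerm (hC : ∀ n : ℕ, C ≠ -n) (hw : ‖w‖ < 1 / 2) :
    Summable (pfaffTerm a β C w) := by
  set t := ‖w‖
  have ht1 : 0 < 1 - t := by linarith
  have hrow (k : ℕ) : HasSum (fun m => ‖hypTerm a β C (-w) k‖ *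
      ((ascPochhammer ℝ m).eval (‖a‖ + k) / m.factorial * t ^ m))
      ((1 - t) ^ (-‖a‖) * ‖hypTerm a β C (t / (1 - t) : ℝ) k‖) := by
    have hsum : (1 - t) ^ (-‖a‖) * ‖hypTerm a β C (t / (1 - t) : ℝ) k‖ =
        ‖hypTerm a β C (-w) k‖ * (1 - t) ^ (-(‖a‖ + k)) := by
      rw [hypTerm_eq_mul_pow _ _ _ (-w), hypTerm_eq_mul_pow, norm_mul, norm_mul, norm_pow,
        norm_pow, norm_neg, Complex.norm_real, Real.norm_of_nonneg (by positivity), neg_add,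
        Real.rpow_add ht1, Real.rpow_neg ht1.le (k : ℝ), Real.rpow_natCast, div_pow]
      ring
    rw [hsum]
    exact (Real.hasSum_ascPochhammer_div_factorial_mul_pow _ (norm_nonneg w)
      (by linarith)).mul_left _
  have hz : ‖((t / (1 - t) : ℝ) : ℂ)‖ < 1 := by
    rw [Complex.norm_real, Real.norm_of_nonneg (by positivity), div_lt_one ht1]
    linarith
  refine Summable.of_norm_bounded ?_ norm_pfaffTerm_le
  refine (summable_prod_of_nonneg fun p => (norm_nonneg _).trans (norm_pfaffTerm_le p)).2
    ⟨fun k => (hrow k).summable, ?_⟩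
  exact ((summable_norm_hypTerm a β hC hz).mul_left _).congr fun k => (hrow k).tsum_eq.symm

end Pfaff

theorem hyp_eq_one_sub_cpow_mul_hyp {a B C w : ℂ} (hC : ∀ n : ℕ, C ≠ -n) (hw : ‖w‖ < 1 / 2) :
    hyp a B C w = (1 - w) ^ (-a) * hyp a (C - B) C (w / (w - 1)) := by
  obtain ⟨s, hs⟩ := summable_pfaffTerm (a := a) (β := C - B) hC hw
  have hdiag : HasSum (hypTerm a B C w) s := by
    simpa only [sum_antidiagonal_pfaffTerm hC, sub_sub_cancel] using hs.sum_antidiagonal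
  have hrows := hs.prod_fiberwise (hasSum_pfaffTerm_fiber (by linarith))
  rw [hyp, hyp, hdiag.tsum_eq, ← tsum_mul_left, hrows.tsum_eq]

/-- Pfaff-type transformation of the analytically continued solution
`u₃(z) = (-z)^(-a) ₂F₁(a, a+1-c; a+1-b; 1/z)` at the real point `z = -x`, `x > 1`:
`x^(-a) ₂F₁(a, a+1-c; a+1-b; -1/x) = (1+x)^(-a) ₂F₁(a, c-b; a+1-b; 1/(1+x))`. -/
theorem pfaff_transformation_u3 (a b c : ℂ)
    (hab : ∀ n : ℕ, a + 1 - b ≠ -(n : ℂ)) (x : ℝ) (hx : 1 < x) :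
    ((x : ℝ) : ℂ) ^ (-a) * hyp a (a + 1 - c) (a + 1 - b) ((-(1 / x) : ℝ) : ℂ) =
      ((1 + x : ℝ) : ℂ) ^ (-a) * hyp a (c - b) (a + 1 - b) ((1 / (1 + x) : ℝ) : ℂ) := by
  have hx0 : 0 < x := by linarith
  have h1x : 1 + x ≠ 0 := by linarith
  have hw : ‖((1 / (1 + x) : ℝ) : ℂ)‖ < 1 / 2 := by
    rw [Complex.norm_real, Real.norm_of_nonneg (by positivity),
      div_lt_div_iff₀ (by linarith) two_pos]
    linarith
  have hfactor : (1 : ℂ) - ((1 / (1 + x) : ℝ) : ℂ) = ((x / (1 + x) : ℝ) : ℂ) := by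
    rw [← ofReal_one, ← ofReal_sub]
    congr 1
    field_simp
    ring
  have harg : ((1 / (1 + x) : ℝ) : ℂ) / (((1 / (1 + x) : ℝ) : ℂ) - 1) = ((-(1 / x) : ℝ) : ℂ) := by
    rw [← ofReal_one, ← ofReal_sub, ← ofReal_div, div_sub_one h1x, div_div_div_cancel_right₀ h1x]
    congr 1
    ring
  rw [hyp_eq_one_sub_cpow_mul_hyp hab hw, show a + 1 - b - (c - b) = a + 1 - c by ring,
    hfactor, harg, ← mul_assoc, ← mul_cpow_ofReal_nonneg (by positivity) (by positivity),
    ← ofReal_mul, mul_div_cancel₀ x h1x]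
end

section
/- Let a, b, c be complex numbers with 2-c not a nonpositive integer. Then the function y(x) = x^{1-c} · ₂F₁(1+a-c, 1+b-c; 2-c; x), viewed as a complex-valued function of the real variable x on the interval (0,1), is twice differentiable and satisfies the Gauss hypergeometric equation x(1-x)·y''(x) + (c - (a+b+1)x)·y'(x) - ab·y(x) = 0 for all x ∈ (0,1). (The second solution u₅ of the Gauss equation.) -/
open Complex Filter Set MeasureTheory

/-!
The coefficients `pₙ` of `F = ₂F₁(A, B; C; ·)` satisfy `(n + 1)(n + C) pₙ₊₁ = (n + A)(n + B) pₙ`.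
By the ratio test the series has radius at least `1`, so it may be differentiated termwise, and
the recurrence says exactly that every coefficient of `z(1 - z)F'' + (C - (A + B + 1)z)F' - ABF`
vanishes (after multiplying `F'` and `F''` by `z`, which shifts indices). For
`(A, B, C) = (1 + a - c, 1 + b - c, 2 - c)` and `y = x^(1-c) F`, differentiating the product gives
`x(1 - x)y'' + (c - (a + b + 1)x)y' - ab y = x^(1-c) (x(1 - x)F'' + (C - (A + B + 1)x)F' - ABF)`.
-/

open Topology

noncomputable def derivCoeff (p : ℕ → ℂ) (n : ℕ) : ℂ := (n + 1) * p (n + 1)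

section PowerSeries

variable {p : ℕ → ℂ} {R : ℝ}

theorem summable_mul_pow_of_summable_norm
    (hp : ∀ r : ℝ, 0 ≤ r → r < R → Summable fun n => ‖p n‖ * r ^ n) {z : ℂ} (hz : ‖z‖ < R) :
    Summable fun n => p n * z ^ n :=
  .of_norm (by simpa only [norm_mul, norm_pow] using hp ‖z‖ (norm_nonneg z) hz)

theorem summable_norm_derivCoeff_mul_pow
    (hp : ∀ r : ℝ, 0 ≤ r → r < R → Summable fun n => ‖p n‖ * r ^ n) :
    ∀ r : ℝ, 0 ≤ r → r < R → Summable fun n => ‖derivCoeff p n‖ * r ^ n := by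
  intro r hr0 hrR
  obtain ⟨r', hrr', hr'R⟩ := exists_between hrR
  have hr' : 0 < r' := hr0.trans_lt hrr'
  have hq0 : 0 ≤ r / r' := by positivity
  have hq1 : r / r' < 1 := (div_lt_one hr').2 hrr'
  -- `(n + 1) (r / r')ⁿ → 0`, so the factor `n + 1` is absorbed by passing from `r` to `r'`.
  have hev : ∀ᶠ n : ℕ in atTop, ((n : ℝ) + 1) * (r / r') ^ n < r' := by
    have := (tendsto_self_mul_const_pow_of_lt_one hq0 hq1).add
      (tendsto_pow_atTop_nhds_zero_of_lt_one hq0 hq1)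
    rw [add_zero] at this
    filter_upwards [this.eventually (gt_mem_nhds hr')] with n hn
    linarith
  refine .of_norm_bounded_eventually_nat
    ((summable_nat_add_iff 1).2 (hp r' hr'.le hr'R)) ?_
  filter_upwards [hev] with n hn
  have hr : r ^ n = (r / r') ^ n * r' ^ n := by rw [div_pow, div_mul_cancel₀ _ (by positivity)]
  rw [Real.norm_of_nonneg (by positivity), derivCoeff, norm_mul, hr, pow_succ]
  have : ‖((n : ℂ) + 1)‖ = (n : ℝ) + 1 := by exact_mod_cast Complex.norm_natCast (n + 1)
  rw [this]
  calc ((n : ℝ) + 1) * ‖p (n + 1)‖ * ((r / r') ^ n * r' ^ n)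
      = ‖p (n + 1)‖ * r' ^ n * (((n : ℝ) + 1) * (r / r') ^ n) := by ring
    _ ≤ ‖p (n + 1)‖ * r' ^ n * r' := by gcongr
    _ = ‖p (n + 1)‖ * (r' ^ n * r') := by ring

theorem hasDerivAt_tsum_mul_pow
    (hp : ∀ r : ℝ, 0 ≤ r → r < R → Summable fun n => ‖p n‖ * r ^ n) {z : ℂ} (hz : ‖z‖ < R) :
    HasDerivAt (fun w => ∑' n, p n * w ^ n) (∑' n, derivCoeff p n * z ^ n) z := by
  obtain ⟨r, hzr, hrR⟩ := exists_between hz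
  have hr : 0 ≤ r := (norm_nonneg z).trans hzr.le
  have hu : Summable fun n : ℕ => n * ‖p n‖ * r ^ (n - 1) := by
    refine (summable_nat_add_iff 1).1 ((summable_norm_derivCoeff_mul_pow hp r hr hrR).congr ?_)
    intro n
    rw [derivCoeff, norm_mul, Nat.add_sub_cancel]
    push_cast
    rw [show ‖(n : ℂ) + 1‖ = (n : ℝ) + 1 by exact_mod_cast Complex.norm_natCast (n + 1)]
  have hderiv := hasDerivAt_tsum_of_isPreconnected (t := Metric.ball 0 r) (y₀ := 0)
    (g := fun n w => p n * w ^ n) (g' := fun n w => p n * (n * w ^ (n - 1)))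
    hu Metric.isOpen_ball (convex_ball 0 r).isPreconnected
    (fun n w _ => (hasDerivAt_pow n w).const_mul (p n))
    (fun n w hw => ?_) (Metric.mem_ball_self ((norm_nonneg z).trans_lt hzr)) ?_
    (mem_ball_zero_iff.2 hzr)
  · refine hderiv.congr_deriv ((hasSum_nat_add_iff' 1).1 ?_).tsum_eq
    simpa [derivCoeff, mul_comm, mul_left_comm, mul_assoc] using
      (summable_mul_pow_of_summable_norm (summable_norm_derivCoeff_mul_pow hp) hz).hasSum
  · rw [norm_mul, norm_mul, norm_pow, Complex.norm_natCast, ← mul_assoc, mul_comm ‖p n‖]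
    gcongr
    exact (mem_ball_zero_iff.1 hw).le
  · simpa using (summable_mul_pow_of_summable_norm hp (z := 0) (by simpa using hr.trans_lt hrR))

theorem hasSum_natCast_mul_mul_pow {z s : ℂ} (h : HasSum (fun n => derivCoeff p n * z ^ n) s) :
    HasSum (fun n : ℕ => n * p n * z ^ n) (z * s) := by
  rw [← hasSum_nat_add_iff' 1]
  simpa [derivCoeff, pow_succ, mul_comm, mul_left_comm, mul_assoc] using h.mul_left z

theorem gauss_eq_zero_of_coeff_recurrence {A B C : ℂ}
    (hrec : ∀ n : ℕ, (n + 1) * (n + C) * p (n + 1) = (n + A) * (n + B) * p n)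
    (hp : ∀ r : ℝ, 0 ≤ r → r < R → Summable fun n => ‖p n‖ * r ^ n) {z : ℂ} (hz : ‖z‖ < R) :
    z * (1 - z) * ∑' n, derivCoeff (derivCoeff p) n * z ^ n
      + (C - (A + B + 1) * z) * ∑' n, derivCoeff p n * z ^ n
      - A * B * ∑' n, p n * z ^ n = 0 := by
  have hp' := summable_norm_derivCoeff_mul_pow hp
  have h0 := (summable_mul_pow_of_summable_norm hp hz).hasSum
  have h1 := (summable_mul_pow_of_summable_norm hp' hz).hasSum
  have h2 := (summable_mul_pow_of_summable_norm (summable_norm_derivCoeff_mul_pow hp') hz).hasSum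
  have e1 := hasSum_natCast_mul_mul_pow h1
  have e2 := hasSum_natCast_mul_mul_pow h2
  have e3 := hasSum_natCast_mul_mul_pow (p := fun n => (n - 1) * p n) <| by
    convert e2 using 2 with n
    simp only [derivCoeff]
    push_cast
    ring
  have hsum := (e2.add (h1.mul_left C)).sub
    ((e3.add (e1.mul_left (A + B + 1))).add (h0.mul_left (A * B)))
  have hzero := hsum.unique <| hasSum_zero.congr_fun fun n => by
    simp only [derivCoeff]
    linear_combination z ^ n * hrec n
  linear_combination hzero

end PowerSeries

section HypergeometricCoefficients

noncomputable def hypCoeff (a b c : ℂ) (n : ℕ) : ℂ :=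
  (ascPochhammer ℂ n).eval a * (ascPochhammer ℂ n).eval b /
    ((ascPochhammer ℂ n).eval c * (n.factorial : ℂ))

theorem hyp_eq_tsum (a b c z : ℂ) : hyp a b c z = ∑' n, hypCoeff a b c n * z ^ n := rfl

theorem hypCoeff_succ (a b c : ℂ) (n : ℕ) :
    hypCoeff a b c (n + 1) = hypCoeff a b c n * ((a + n) * (b + n) / ((n + 1) * (c + n))) := by
  simp only [hypCoeff, ascPochhammer_succ_eval, Nat.factorial_succ]
  rw [mul_div_assoc', div_mul_eq_mul_div, div_div]
  push_cast
  congr 1 <;> ring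

theorem hypCoeff_recurrence {a b c : ℂ} (hc : ∀ n : ℕ, c ≠ -n) (n : ℕ) :
    (n + 1) * (n + c) * hypCoeff a b c (n + 1) = (n + a) * (n + b) * hypCoeff a b c n := by
  have hcn : c + n ≠ 0 := fun h => hc n (by linear_combination h)
  have hn : (n : ℂ) + 1 ≠ 0 := Nat.cast_add_one_ne_zero n
  rw [hypCoeff_succ]
  field_simp
  ring

theorem tendsto_hypCoeff_ratio (a b c : ℂ) :
    Tendsto (fun n : ℕ => (a + n) * (b + n) / ((n + 1) * (c + n))) atTop (𝓝 1) := by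
  have ha := tendsto_add_mul_div_add_mul_atTop_nhds a 1 (1 : ℂ) one_ne_zero
  have hb := tendsto_add_mul_div_add_mul_atTop_nhds b c (1 : ℂ) one_ne_zero
  simp only [one_mul, div_one] at ha hb
  simpa [mul_div_mul_comm, add_comm] using ha.mul hb

theorem summable_norm_hypCoeff_mul_pow (a b c : ℂ) {r : ℝ} (hr0 : 0 ≤ r) (hr1 : r < 1) :
    Summable fun n => ‖hypCoeff a b c n‖ * r ^ n := by
  have hlim : Tendsto (fun n : ℕ => r * ‖(a + n) * (b + n) / ((n + 1) * (c + n))‖) atTop (𝓝 r) := by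
    simpa using ((tendsto_hypCoeff_ratio a b c).norm.const_mul r)
  refine summable_of_ratio_norm_eventually_le (r := (1 + r) / 2) (by linarith) ?_
  filter_upwards [hlim.eventually (gt_mem_nhds (by linarith : r < (1 + r) / 2))] with n hn
  rw [Real.norm_of_nonneg (by positivity), Real.norm_of_nonneg (by positivity), hypCoeff_succ,
    norm_mul, pow_succ]
  calc ‖hypCoeff a b c n‖ * ‖(a + n) * (b + n) / ((n + 1) * (c + n))‖ * (r ^ n * r)
      = ‖hypCoeff a b c n‖ * r ^ n * (r * ‖(a + n) * (b + n) / ((n + 1) * (c + n))‖) := by ring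
    _ ≤ ‖hypCoeff a b c n‖ * r ^ n * ((1 + r) / 2) := by gcongr
    _ = (1 + r) / 2 * (‖hypCoeff a b c n‖ * r ^ n) := by ring

end HypergeometricCoefficients

theorem hasDerivAt_ofReal_cpow {x : ℝ} (hx : 0 < x) (s : ℂ) :
    HasDerivAt (fun t : ℝ => (t : ℂ) ^ s) (s * (x : ℂ) ^ (s - 1)) x :=
  (hasStrictDerivAt_cpow_const (ofReal_mem_slitPlane.2 hx)).hasDerivAt.comp_ofReal

/-- The second solution `u₅(x) = x^(1-c) ₂F₁(1+a-c, 1+b-c; 2-c; x)` of the Gauss equation: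
for `2-c` not a nonpositive integer it is twice differentiable on `(0,1)` and satisfies
`x(1-x)y'' + (c-(a+b+1)x)y' - ab·y = 0` there. -/
theorem second_solution_solves_gauss_equation (a b c : ℂ)
    (hc : ∀ n : ℕ, 2 - c ≠ -(n : ℂ)) :
    ∀ x ∈ Ioo (0 : ℝ) 1,
      DifferentiableAt ℝ
        (fun t : ℝ => ((t : ℂ)) ^ (1 - c) * hyp (1 + a - c) (1 + b - c) (2 - c) t) x ∧
      DifferentiableAt ℝ
        (deriv fun t : ℝ => ((t : ℂ)) ^ (1 - c) * hyp (1 + a - c) (1 + b - c) (2 - c) t) x ∧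
      (x : ℂ) * (1 - (x : ℂ)) *
          deriv (deriv fun t : ℝ =>
            ((t : ℂ)) ^ (1 - c) * hyp (1 + a - c) (1 + b - c) (2 - c) t) x +
        (c - (a + b + 1) * (x : ℂ)) *
          deriv (fun t : ℝ =>
            ((t : ℂ)) ^ (1 - c) * hyp (1 + a - c) (1 + b - c) (2 - c) t) x -
        a * b * (((x : ℝ) : ℂ) ^ (1 - c) * hyp (1 + a - c) (1 + b - c) (2 - c) x) = 0 := by
  intro x hx
  set p := hypCoeff (1 + a - c) (1 + b - c) (2 - c)
  have hp : ∀ r : ℝ, 0 ≤ r → r < 1 → Summable fun n => ‖p n‖ * r ^ n :=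
    fun _ => summable_norm_hypCoeff_mul_pow _ _ _
  have hp' := summable_norm_derivCoeff_mul_pow hp
  have hnorm : ∀ t ∈ Ioo (0 : ℝ) 1, ‖(t : ℂ)‖ < 1 := fun t ht => by
    rw [norm_real, Real.norm_of_nonneg ht.1.le]; exact ht.2
  set F1 := fun w : ℂ => ∑' n, derivCoeff p n * w ^ n
  set F2 := fun w : ℂ => ∑' n, derivCoeff (derivCoeff p) n * w ^ n
  have hF : ∀ t ∈ Ioo (0 : ℝ) 1,
      HasDerivAt (fun s : ℝ => hyp (1 + a - c) (1 + b - c) (2 - c) s) (F1 t) t :=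
    fun t ht => (hasDerivAt_tsum_mul_pow hp (hnorm t ht)).comp_ofReal
  have hF1 : HasDerivAt (fun s : ℝ => F1 s) (F2 x) x :=
    (hasDerivAt_tsum_mul_pow hp' (hnorm x hx)).comp_ofReal
  have hy : ∀ t ∈ Ioo (0 : ℝ) 1, HasDerivAt
      (fun s : ℝ => (s : ℂ) ^ (1 - c) * hyp (1 + a - c) (1 + b - c) (2 - c) s)
      ((1 - c) * (t : ℂ) ^ (1 - c - 1) * hyp (1 + a - c) (1 + b - c) (2 - c) t
        + (t : ℂ) ^ (1 - c) * F1 t) t :=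
    fun t ht => (hasDerivAt_ofReal_cpow ht.1 _).mul (hF t ht)
  have hy' := ((((hasDerivAt_ofReal_cpow hx.1 (1 - c - 1)).const_mul (1 - c)).mul (hF x hx)).add
      ((hasDerivAt_ofReal_cpow hx.1 (1 - c)).mul hF1)).congr_of_eventuallyEq <| by
    filter_upwards [isOpen_Ioo.mem_nhds hx] with t ht using (hy t ht).deriv
  refine ⟨(hy x hx).differentiableAt, hy'.differentiableAt, ?_⟩
  rw [hy'.deriv, (hy x hx).deriv]
  have hode := gauss_eq_zero_of_coeff_recurrence (hypCoeff_recurrence hc) hp (hnorm x hx)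
  have hx0 : (x : ℂ) ≠ 0 := ofReal_ne_zero.2 hx.1.ne'
  have hpow (s : ℂ) : (x : ℂ) ^ s = (x : ℂ) ^ (s - 1) * x := by
    conv_lhs => rw [← sub_add_cancel s 1, cpow_add _ _ hx0, cpow_one]
  rw [← hyp_eq_tsum] at hode
  rw [hpow (1 - c), hpow (1 - c - 1)]
  linear_combination ((x : ℂ) ^ (1 - c - 1 - 1) * x ^ 2) * hode
end

section
/- Let k₁ ≥ k₂ ≥ 1 be real numbers, let p₁, p₂ be real, and let j₁₂ be a complex number with Re j₁₂ > 0. Define f(t) = (1-t)^{i p₁ + i p₂ - j₁₂} · t^{-i p₂ + k₂ - 1} · ₂F₁(k₁+k₂-j₁₂, 1-j₁₂-k₁+k₂; 2k₂; t) for t ∈ (0,1/2). Then f is integrable with respect to Lebesgue measure on (0,1/2), and lim_{t → 0⁺} t^{1-k₂} · |f(t)| = 1; that is, the integrand of the first integral in I(+,−,𝒥) behaves like t^{k₂-1} as t → 0. -/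
open Complex Filter Set MeasureTheory

lemma ascPochhammer_ne {c : ℂ} (hc : ∀ k : ℕ, c + k ≠ 0) (n : ℕ) :
    (ascPochhammer ℂ n).eval c ≠ 0 := by
  induction n with
  | zero => simp
  | succ n ih =>
    rw [ascPochhammer_succ_right]
    simp only [Polynomial.eval_mul, Polynomial.eval_add, Polynomial.eval_X,
      Polynomial.eval_natCast]
    exact mul_ne_zero ih (hc n)

lemma hypTerm_succ (a b c z : ℂ) {n : ℕ} (h1 : (ascPochhammer ℂ n).eval c ≠ 0)
    (h2 : c + n ≠ 0) :
    hypTerm a b c z (n + 1) =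
      hypTerm a b c z n * ((a + n) * (b + n) / ((c + n) * (n + 1)) * z) := by
  have hf : (n.factorial : ℂ) ≠ 0 := Nat.cast_ne_zero.2 n.factorial_ne_zero
  have hn1 : ((n : ℂ) + 1) ≠ 0 := by
    exact Nat.cast_add_one_ne_zero n
  simp only [hypTerm, ascPochhammer_succ_right, Polynomial.eval_mul, Polynomial.eval_add,
    Polynomial.eval_X, Polynomial.eval_natCast, Nat.factorial_succ, Nat.cast_mul, Nat.cast_add,
    Nat.cast_one, pow_succ]
  field_simp

lemma ratio_bound (a b c : ℂ) (hc : 0 ≤ c.re) :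
    ∃ N : ℕ, ∀ n : ℕ, N ≤ n → ‖(a + n) * (b + n) / ((c + n) * ((n : ℂ) + 1))‖ ≤ 3 / 2 := by
  set A := ‖a‖ with hA
  set B := ‖b‖ with hB
  refine ⟨⌈2 * A + 2 * B + A * B⌉₊ + 1, fun n hn => ?_⟩
  have hA0 : 0 ≤ A := norm_nonneg a
  have hB0 : 0 ≤ B := norm_nonneg b
  have hnR : 2 * A + 2 * B + A * B + 1 ≤ (n : ℝ) := by
    have h1 : (⌈2 * A + 2 * B + A * B⌉₊ + 1 : ℝ) ≤ n := by exact_mod_cast Nat.cast_le.2 hn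
    have h2 : 2 * A + 2 * B + A * B ≤ (⌈2 * A + 2 * B + A * B⌉₊ : ℝ) := Nat.le_ceil _
    linarith
  have hn1 : (1 : ℝ) ≤ n := by nlinarith
  have han : ‖a + n‖ ≤ A + n := by
    simpa using norm_add_le a (n : ℂ)
  have hbn : ‖b + n‖ ≤ B + n := by
    simpa using norm_add_le b (n : ℂ)
  have hcn : (n : ℝ) ≤ ‖c + n‖ := by
    have : (c + n).re = c.re + n := by simp
    calc (n : ℝ) ≤ c.re + n := by linarith
    _ = (c + n).re := this.symm
    _ ≤ ‖c + n‖ := Complex.re_le_norm _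
  have hn1n : ‖((n : ℂ) + 1)‖ = (n : ℝ) + 1 := by
    have : ((n : ℂ) + 1) = ((n + 1 : ℝ) : ℂ) := by push_cast; ring
    rw [this, Complex.norm_real, Real.norm_of_nonneg (by linarith)]
  rw [norm_div, norm_mul, norm_mul, hn1n]
  rw [div_le_iff₀ (by nlinarith [norm_nonneg (c + (n:ℂ))])]
  have key : (A + n) * (B + n) ≤ 3 / 2 * ((n : ℝ) * (n + 1)) := by
    nlinarith [mul_nonneg (sub_nonneg.2 hnR) (by linarith : (0:ℝ) ≤ (n:ℝ)), mul_nonneg (mul_nonneg hA0 hB0) (by linarith : (0:ℝ) ≤ (n:ℝ) - 1)]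
  calc ‖a + (n:ℂ)‖ * ‖b + (n:ℂ)‖ ≤ (A + n) * (B + n) := by
        apply mul_le_mul han hbn (norm_nonneg _) (by linarith)
  _ ≤ 3 / 2 * ((n : ℝ) * (n + 1)) := key
  _ ≤ 3 / 2 * (‖c + (n:ℂ)‖ * ((n:ℝ) + 1)) := by
        have := mul_le_mul_of_nonneg_right hcn (by linarith : (0:ℝ) ≤ (n:ℝ) + 1)
        linarith

lemma hyp_norm_summable (a b c z : ℂ) (hcne : ∀ k : ℕ, c + (k : ℂ) ≠ 0) (hc : 0 ≤ c.re)
    (hz : ‖z‖ ≤ 1 / 2) : Summable (fun n => ‖hypTerm a b c z n‖) := by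
  obtain ⟨N, hN⟩ := ratio_bound a b c hc
  apply summable_of_ratio_norm_eventually_le (r := 3 / 4) (by norm_num)
  filter_upwards [eventually_ge_atTop N] with n hn
  rw [norm_norm, norm_norm,
    hypTerm_succ a b c z (ascPochhammer_ne hcne n) (hcne n), norm_mul, norm_mul]
  have h1 := hN n hn
  have h2 : ‖(a + n) * (b + n) / ((c + n) * ((n : ℂ) + 1))‖ * ‖z‖ ≤ 3 / 4 := by
    calc ‖(a + n) * (b + n) / ((c + n) * ((n : ℂ) + 1))‖ * ‖z‖ ≤ (3/2) * (1/2) := by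
          apply mul_le_mul h1 hz (norm_nonneg _) (by norm_num)
    _ = 3 / 4 := by norm_num
  nlinarith [norm_nonneg (hypTerm a b c z n), norm_nonneg z,
    norm_nonneg ((a + n) * (b + n) / ((c + n) * ((n : ℂ) + 1)))]


lemma hypTerm_norm_le (a b c z w : ℂ) (h : ‖z‖ ≤ ‖w‖) (n : ℕ) :
    ‖hypTerm a b c z n‖ ≤ ‖hypTerm a b c w n‖ := by
  simp only [hypTerm, norm_mul, norm_div, norm_pow]
  gcongr

lemma hyp_zero (a b c : ℂ) : hyp a b c 0 = 1 := by
  unfold hyp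
  rw [tsum_eq_single 0]
  · simp [hypTerm]
  · intro n hn
    simp [hypTerm, zero_pow hn]

lemma half_norm : ‖(((1:ℝ)/2 : ℝ) : ℂ)‖ = 1 / 2 := by
  rw [Complex.norm_real, Real.norm_of_nonneg (by norm_num)]

lemma hyp_contOn (a b c : ℂ) (hcne : ∀ k : ℕ, c + (k : ℂ) ≠ 0) (hc : 0 ≤ c.re) :
    ContinuousOn (fun t : ℝ => hyp a b c t) (Icc (0:ℝ) (1/2)) := by
  apply continuousOn_tsum (u := fun n => ‖hypTerm a b c (((1:ℝ)/2 : ℝ) : ℂ) n‖)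
  · intro n
    apply Continuous.continuousOn
    exact continuous_const.mul (Complex.continuous_ofReal.pow n)
  · exact hyp_norm_summable a b c _ hcne hc (by rw [half_norm])
  · intro n x hx
    apply hypTerm_norm_le
    rw [half_norm, Complex.norm_real, Real.norm_of_nonneg hx.1]
    exact hx.2

lemma hyp_norm_le (a b c z : ℂ) (hcne : ∀ k : ℕ, c + (k : ℂ) ≠ 0) (hc : 0 ≤ c.re)
    (hz : ‖z‖ ≤ 1 / 2) :
    ‖hyp a b c z‖ ≤ ∑' n, ‖hypTerm a b c (((1:ℝ)/2 : ℝ) : ℂ) n‖ := by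
  calc ‖hyp a b c z‖ ≤ ∑' n, ‖hypTerm a b c z n‖ :=
        norm_tsum_le_tsum_norm (hyp_norm_summable a b c z hcne hc hz)
  _ ≤ ∑' n, ‖hypTerm a b c (((1:ℝ)/2 : ℝ) : ℂ) n‖ := by
      apply Summable.tsum_le_tsum (fun n => hypTerm_norm_le a b c z _ (by rw [half_norm]; exact hz) n)
        (hyp_norm_summable a b c z hcne hc hz)
        (hyp_norm_summable a b c _ hcne hc (by rw [half_norm]))


/-- The integrand of the first integral of `I(+,−,𝒥)`:
`f(t) = (1-t)^(ip₁+ip₂-j₁₂) t^(-ip₂+k₂-1) ₂F₁(k₁+k₂-j₁₂, 1-j₁₂-k₁+k₂; 2k₂; t)`. -/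
noncomputable def fPN (k₁ k₂ p₁ p₂ : ℝ) (j₁₂ : ℂ) (t : ℝ) : ℂ :=
  ((1 - t : ℝ) : ℂ) ^ (I * (p₁ : ℂ) + I * (p₂ : ℂ) - j₁₂) *
    ((t : ℝ) : ℂ) ^ (-(I * (p₂ : ℂ)) + (k₂ : ℂ) - 1) *
    hyp ((k₁ : ℂ) + k₂ - j₁₂) (1 - j₁₂ - k₁ + k₂) (2 * (k₂ : ℂ)) t

/-- For `k₁ ≥ k₂ ≥ 1` and `Re j₁₂ > 0`, the integrand of the first integral of
`I(+,−,𝒥)` is integrable on `(0,1/2)` and behaves like `t^(k₂-1)` as `t → 0⁺`. -/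
theorem integral_PN_first_piece (k₁ k₂ p₁ p₂ : ℝ) (j₁₂ : ℂ)
    (h21 : k₂ ≤ k₁) (h2 : 1 ≤ k₂) (hj : 0 < j₁₂.re) :
    IntegrableOn (fPN k₁ k₂ p₁ p₂ j₁₂) (Ioo 0 (1 / 2)) volume ∧
    Tendsto (fun t : ℝ => t ^ (1 - k₂) * ‖fPN k₁ k₂ p₁ p₂ j₁₂ t‖)
      (nhdsWithin 0 (Ioi 0)) (nhds 1) := by
  set a : ℂ := (k₁ : ℂ) + k₂ - j₁₂ with ha
  set b : ℂ := 1 - j₁₂ - k₁ + k₂ with hb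
  set c : ℂ := 2 * (k₂ : ℂ) with hc
  have hcre : c.re = 2 * k₂ := by simp [hc]
  have hcne : ∀ k : ℕ, c + (k : ℂ) ≠ 0 := by
    intro k h
    have := congrArg Complex.re h
    simp [hcre] at this
    have hk : (0:ℝ) ≤ (k:ℝ) := Nat.cast_nonneg k
    linarith
  have hc0 : 0 ≤ c.re := by rw [hcre]; linarith
  set M : ℝ := ∑' n, ‖hypTerm a b c (((1:ℝ)/2 : ℝ) : ℂ) n‖ with hM
  have hM0 : 0 ≤ M := tsum_nonneg (fun n => norm_nonneg _)
  -- real exponents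
  have hre1 : (I * (p₁ : ℂ) + I * (p₂ : ℂ) - j₁₂).re = -j₁₂.re := by simp
  have hre2 : (-(I * (p₂ : ℂ)) + (k₂ : ℂ) - 1).re = k₂ - 1 := by simp
  -- abs of fPN on (0, 1/2)
  have habs : ∀ t : ℝ, t ∈ Ioo (0:ℝ) (1/2) →
      ‖fPN k₁ k₂ p₁ p₂ j₁₂ t‖ =
        (1 - t) ^ (-j₁₂.re) * t ^ (k₂ - 1) * ‖hyp a b c t‖ := by
    intro t ht
    have h1t : (0:ℝ) < 1 - t := by linarith [ht.2]
    rw [fPN, norm_mul, norm_mul,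
      Complex.norm_cpow_eq_rpow_re_of_pos h1t, Complex.norm_cpow_eq_rpow_re_of_pos ht.1,
      hre1, hre2]
  -- continuity of hyp part
  have hhypCont := hyp_contOn a b c hcne hc0
  constructor
  · -- integrability
    have hcont : ContinuousOn (fPN k₁ k₂ p₁ p₂ j₁₂) (Ioo 0 (1/2)) := by
      intro t ht
      apply ContinuousWithinAt.mul
      apply ContinuousWithinAt.mul
      · have h1t : (1:ℝ) - t ≠ 0 := by rcases ht with ⟨h1, h2⟩; intro h; linarith
        exact (((continuousAt_ofReal_cpow_const (1 - t) _ (Or.inr h1t)).comp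
          ((continuous_const.sub continuous_id).continuousAt))).continuousWithinAt
      · exact (continuousAt_ofReal_cpow_const t _ (Or.inr ht.1.ne')).continuousWithinAt
      · exact (hhypCont.mono (Ioo_subset_Icc_self)).continuousWithinAt ht
    refine ⟨hcont.aestronglyMeasurable measurableSet_Ioo, ?_⟩
    apply HasFiniteIntegral.restrict_of_bounded
      (C := (1/2 : ℝ) ^ (-j₁₂.re) * M) measure_Ioo_lt_top
    rw [ae_restrict_iff' measurableSet_Ioo]
    apply ae_of_all
    intro t ht
    rw [habs t ht]
    have hb1 : (1 - t) ^ (-j₁₂.re) ≤ (1/2 : ℝ) ^ (-j₁₂.re) :=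
      Real.rpow_le_rpow_of_nonpos (by norm_num) (by linarith [ht.2]) (by linarith)
    have hb2 : t ^ (k₂ - 1) ≤ 1 := Real.rpow_le_one ht.1.le (by linarith [ht.2]) (by linarith)
    have hb3 : ‖hyp a b c t‖ ≤ M := by
      apply hyp_norm_le a b c _ hcne hc0
      rw [Complex.norm_real, Real.norm_of_nonneg ht.1.le]
      exact ht.2.le
    have h1n : (0:ℝ) ≤ (1 - t) ^ (-j₁₂.re) := Real.rpow_nonneg (by linarith [ht.2]) _
    have h2n : (0:ℝ) ≤ t ^ (k₂ - 1) := Real.rpow_nonneg ht.1.le _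
    calc (1 - t) ^ (-j₁₂.re) * t ^ (k₂ - 1) * ‖hyp a b c t‖
        ≤ (1/2 : ℝ) ^ (-j₁₂.re) * 1 * M := by
          apply mul_le_mul (mul_le_mul hb1 hb2 h2n (Real.rpow_nonneg (by norm_num) _))
            hb3 (norm_nonneg _) (by positivity)
    _ = (1/2 : ℝ) ^ (-j₁₂.re) * M := by ring
  · -- the limit
    have heq : ∀ᶠ t : ℝ in nhdsWithin (0:ℝ) (Ioi 0),
        (1 - t) ^ (-j₁₂.re) * ‖hyp a b c (t:ℂ)‖
          = t ^ (1 - k₂) * ‖fPN k₁ k₂ p₁ p₂ j₁₂ t‖ := by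
      filter_upwards [Ioo_mem_nhdsGT_of_mem (by norm_num : (0:ℝ) ∈ Ico (0:ℝ) (1/2))]
        with t ht
      rw [habs t ht]
      have hpow : t ^ (1 - k₂) * t ^ (k₂ - 1) = 1 := by
        rw [← Real.rpow_add ht.1, show (1 - k₂) + (k₂ - 1) = 0 by ring, Real.rpow_zero]
      calc (1 - t) ^ (-j₁₂.re) * ‖hyp a b c (t:ℂ)‖
          = (1 - t) ^ (-j₁₂.re) * ‖hyp a b c (t:ℂ)‖ * (t ^ (1 - k₂) * t ^ (k₂ - 1)) := by
            rw [hpow, mul_one]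
      _ = t ^ (1 - k₂) * ((1 - t) ^ (-j₁₂.re) * t ^ (k₂ - 1) * ‖hyp a b c (t:ℂ)‖) := by
            ring
    have t1 : Tendsto (fun t : ℝ => (1 - t) ^ (-j₁₂.re)) (nhdsWithin 0 (Ioi 0)) (nhds 1) := by
      have c1 : ContinuousAt (fun t : ℝ => (1 - t) ^ (-j₁₂.re)) 0 := by
        apply ContinuousAt.comp (g := fun x : ℝ => x ^ (-j₁₂.re))
        · have h := Real.continuousAt_rpow_const 1 (-j₁₂.re) (Or.inl one_ne_zero)
          simpa using h
        · exact (continuous_const.sub continuous_id).continuousAt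
      have h2' := c1.tendsto.mono_left (nhdsWithin_le_nhds (s := Ioi (0:ℝ)))
      simpa using h2'
    have t2 : Tendsto (fun t : ℝ => ‖hyp a b c t‖) (nhdsWithin 0 (Ioi 0)) (nhds 1) := by
      have hcw : ContinuousWithinAt (fun t : ℝ => hyp a b c t) (Icc 0 (1/2)) 0 :=
        hhypCont.continuousWithinAt (by constructor <;> norm_num)
      have hle : nhdsWithin (0:ℝ) (Ioi 0) ≤ nhdsWithin (0:ℝ) (Icc 0 (1/2)) := by
        rw [← nhdsWithin_Ioo_eq_nhdsGT (by norm_num : (0:ℝ) < 1/2)]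
        exact nhdsWithin_mono 0 Ioo_subset_Icc_self
      have hval : hyp a b c ((0:ℝ) : ℂ) = 1 := by
        rw [show (((0:ℝ)) : ℂ) = 0 by norm_num, hyp_zero]
      have := (continuous_norm.tendsto _).comp (hcw.tendsto.mono_left hle)
      rw [hval] at this
      simpa [Function.comp_def] using this
    have := t1.mul t2
    rw [one_mul] at this
    exact this.congr' heq
end

section
/- Let k₁ ≥ 1 be real and let s₁₂, s₂, p₁, p₂ be real. Then the complex-valued function t ↦ t^{k₁ - 1 - i p₁} · (1-t)^{-i s₁₂ - 1/2 + i p₁ + i p₂} · ₂F₁(k₁-i s₁₂-i s₂, k₁-i s₁₂+i s₂; 2k₁; t) is integrable with respect to Lebesgue measure on (0,1/2), and the function t ↦ t^{k₁ - 1 - i p₁} · (1-t)^{i s₁₂ - 1/2 + i p₁ + i p₂} · ₂F₁(k₁+i s₁₂+i s₂, k₁+i s₁₂-i s₂; 1+2i s₁₂; 1-t) is integrable with respect to Lebesgue measure on (1/2,1). (Convergence of the two pieces of the integral I₁(+,C,C) for the coupling of a positive discrete series with a continuous series to a continuous series.) -/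
/-!
`hyp` is Mathlib's `ordinaryHypergeometric`, whose series has radius of convergence `1` as soon as
no parameter is a nonpositive integer; here every parameter has positive real part. So the
hypergeometric factor is continuous, hence bounded, on the compact intervals `[0, 1/2]` and
`[1/2, 1]` (where its argument `1 - t` lies in `[0, 1/2]`). What remains is the Beta integrand
`t ^ u * (1 - t) ^ v` with `Re u = k₁ - 1` and `Re v = -1/2`, integrable on `(0, 1)`.
-/

open Complex Filter Set MeasureTheory

theorem hyp_eq_ordinaryHypergeometric (a b c : ℂ) : hyp a b c = ordinaryHypergeometric a b c := by
  ext z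
  rw [ordinaryHypergeometric_eq_tsum]
  refine tsum_congr fun n => ?_
  rw [hypTerm, smul_eq_mul]
  ring

theorem continuousOn_hyp {a b c : ℂ}
    (habc : ∀ n : ℕ, (n : ℂ) ≠ -a ∧ (n : ℂ) ≠ -b ∧ (n : ℂ) ≠ -c) :
    ContinuousOn (hyp a b c) (Metric.ball 0 1) := by
  have h := (ordinaryHypergeometricSeries ℂ a b c).continuousOn
  rw [ordinaryHypergeometricSeries_radius_eq_one ℂ a b c habc, ← ENNReal.coe_one,
    Metric.eball_coe, NNReal.coe_one] at h
  rwa [hyp_eq_ordinaryHypergeometric]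

theorem natCast_ne_neg_of_re_pos {z : ℂ} (hz : 0 < z.re) (n : ℕ) : (n : ℂ) ≠ -z := by
  intro h
  have hre : (n : ℂ).re = (-z).re := congrArg re h
  rw [natCast_re, neg_re] at hre
  linarith [n.cast_nonneg (α := ℝ)]

theorem integrableOn_Ioo_cpow_mul_one_sub_cpow_mul {u v : ℂ} (hu : -1 < u.re) (hv : -1 < v.re) {g : ℝ → ℂ}
    {a b : ℝ} (ha : 0 ≤ a) (hb : b ≤ 1) (hg : ContinuousOn g (Icc a b)) :
    IntegrableOn (fun t : ℝ => (t : ℂ) ^ u * ((1 - t : ℝ) : ℂ) ^ v * g t) (Ioo a b) := by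
  have hβ : IntegrableOn (fun t : ℝ => (t : ℂ) ^ u * ((1 - t : ℝ) : ℂ) ^ v) (Ioo a b) := by
    have h := betaIntegral_convergent (u := u + 1) (v := v + 1) (by simp; linarith)
      (by simp; linarith)
    rw [intervalIntegrable_iff_integrableOn_Ioo_of_le zero_le_one] at h
    simpa using h.mono_set (Ioo_subset_Ioo ha hb)
  exact hβ.mul_continuousOn_of_subset hg measurableSet_Ioo isCompact_Icc Ioo_subset_Icc_self

theorem ContinuousOn.hyp_ofReal {a b c : ℂ}
    (habc : ∀ n : ℕ, (n : ℂ) ≠ -a ∧ (n : ℂ) ≠ -b ∧ (n : ℂ) ≠ -c) {f : ℝ → ℝ} {s : Set ℝ}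
    (hf : ContinuousOn f s) (hfs : MapsTo f s (Ioo (-1) 1)) :
    ContinuousOn (fun t => hyp a b c (f t)) s := by
  refine (continuousOn_hyp habc).comp (continuous_ofReal.comp_continuousOn hf) fun t ht => ?_
  simpa [abs_lt] using hfs ht

/-- Convergence of the two pieces of the integral `I₁(+,C,C)` for the coupling of a
positive discrete series with a continuous series to a continuous series. -/
theorem integral_PCC_I1_integrable (k₁ s₁₂ s₂ p₁ p₂ : ℝ) (h1 : 1 ≤ k₁) :
    IntegrableOn (fun t : ℝ =>
        ((t : ℝ) : ℂ) ^ ((k₁ : ℂ) - 1 - I * (p₁ : ℂ)) *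
          ((1 - t : ℝ) : ℂ) ^ (-(I * (s₁₂ : ℂ)) - 1 / 2 + I * (p₁ : ℂ) + I * (p₂ : ℂ)) *
          hyp ((k₁ : ℂ) - I * (s₁₂ : ℂ) - I * (s₂ : ℂ))
            ((k₁ : ℂ) - I * (s₁₂ : ℂ) + I * (s₂ : ℂ)) (2 * (k₁ : ℂ)) t)
      (Ioo 0 (1 / 2)) volume ∧
    IntegrableOn (fun t : ℝ =>
        ((t : ℝ) : ℂ) ^ ((k₁ : ℂ) - 1 - I * (p₁ : ℂ)) *
          ((1 - t : ℝ) : ℂ) ^ (I * (s₁₂ : ℂ) - 1 / 2 + I * (p₁ : ℂ) + I * (p₂ : ℂ)) *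
          hyp ((k₁ : ℂ) + I * (s₁₂ : ℂ) + I * (s₂ : ℂ))
            ((k₁ : ℂ) + I * (s₁₂ : ℂ) - I * (s₂ : ℂ)) (1 + 2 * I * (s₁₂ : ℂ))
            ((1 - t : ℝ) : ℂ))
      (Ioo (1 / 2) 1) volume := by
  have hparams {a b c : ℂ} (ha : 0 < a.re) (hb : 0 < b.re) (hc : 0 < c.re) (n : ℕ) :
      (n : ℂ) ≠ -a ∧ (n : ℂ) ≠ -b ∧ (n : ℂ) ≠ -c :=
    ⟨natCast_ne_neg_of_re_pos ha n, natCast_ne_neg_of_re_pos hb n, natCast_ne_neg_of_re_pos hc n⟩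
  have hu : -1 < ((k₁ : ℂ) - 1 - I * (p₁ : ℂ)).re := by simp; linarith
  constructor
  · refine integrableOn_Ioo_cpow_mul_one_sub_cpow_mul hu (by norm_num) le_rfl (by norm_num)
      (ContinuousOn.hyp_ofReal (hparams ?_ ?_ ?_) continuousOn_id
        fun t ht => Icc_subset_Ioo (by norm_num) (by norm_num) ht)
    all_goals simp; linarith
  · refine integrableOn_Ioo_cpow_mul_one_sub_cpow_mul hu (by norm_num) (by norm_num) le_rfl
      (ContinuousOn.hyp_ofReal (hparams ?_ ?_ ?_) (continuousOn_const.sub continuousOn_id)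
        fun t ht => ⟨by linarith [ht.2], by linarith [ht.1]⟩)
    all_goals simp <;> linarith
end
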